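/- The weak stochastic order is transitive on any set of distributions that share a common support and have continuous quantile functions: if F ≥_wS G and G ≥_wS H for such F, G, H, then F ≥_wS H. -/
import Mathlib

open Set Filter Topology

/-- `F ≥_wS G`: the weak stochastic order in terms of quantile functions. -/
def WeakStochOrder (qF qG : ℝ → ℝ) : Prop :=
  ∀ τ ξ : ℝ, 1 / 2 < τ → τ < 1 → 1 / 2 < ξ → ξ < 1 →
    0 ≤ max (qF τ - qG ξ) (qF (1 - τ) - qG (1 - ξ))

/-- Left-limit bound: if `f ≤ C` on `Ioo a x` then `f x ≤ C` by continuity. -/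
lemma cont_le_of_left (f : ℝ → ℝ) {s : Set ℝ} (hfc : ContinuousOn f s)
    {a x C : ℝ} (hax : a < x) (hxs : x ∈ s) (hsub : Set.Ioo a x ⊆ s)
    (hb : ∀ y ∈ Set.Ioo a x, f y ≤ C) : f x ≤ C := by
  have hne : (𝓝[Set.Ioo a x] x).NeBot := by
    rw [← mem_closure_iff_nhdsWithin_neBot, closure_Ioo hax.ne]
    exact ⟨hax.le, le_refl x⟩
  have hc : Filter.Tendsto f (𝓝[Set.Ioo a x] x) (𝓝 (f x)) :=
    ((hfc.continuousWithinAt hxs).mono hsub)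
  exact le_of_tendsto hc (eventually_mem_nhdsWithin.mono fun y hy => hb y hy)

/-- Right-limit bound: if `C ≤ f` on `Ioo x b` then `C ≤ f x` by continuity. -/
lemma cont_ge_of_right (f : ℝ → ℝ) {s : Set ℝ} (hfc : ContinuousOn f s)
    {x b C : ℝ} (hxb : x < b) (hxs : x ∈ s) (hsub : Set.Ioo x b ⊆ s)
    (hb : ∀ y ∈ Set.Ioo x b, C ≤ f y) : C ≤ f x := by
  have hne : (𝓝[Set.Ioo x b] x).NeBot := by
    rw [← mem_closure_iff_nhdsWithin_neBot, closure_Ioo hxb.ne]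
    exact ⟨le_refl x, hxb.le⟩
  have hc : Filter.Tendsto f (𝓝[Set.Ioo x b] x) (𝓝 (f x)) :=
    ((hfc.continuousWithinAt hxs).mono hsub)
  exact ge_of_tendsto hc (eventually_mem_nhdsWithin.mono fun y hy => hb y hy)

/-- The weak stochastic order is transitive on distributions with a common
support and continuous quantile functions. -/
theorem weak_stochastic_transitive (qF qG qH : ℝ → ℝ)
    (hF : MonotoneOn qF (Set.Ioo 0 1)) (hG : MonotoneOn qG (Set.Ioo 0 1))
    (hH : MonotoneOn qH (Set.Ioo 0 1))
    (hFc : ContinuousOn qF (Set.Ioo 0 1)) (hGc : ContinuousOn qG (Set.Ioo 0 1))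
    (hHc : ContinuousOn qH (Set.Ioo 0 1))
    (hFG : closure (qF '' Set.Ioo 0 1) = closure (qG '' Set.Ioo 0 1))
    (hGH : closure (qG '' Set.Ioo 0 1) = closure (qH '' Set.Ioo 0 1))
    (h1 : WeakStochOrder qF qG) (h2 : WeakStochOrder qG qH) :
    WeakStochOrder qF qH := by
  intro τ ξ hτ hτ1 hξ hξ1
  by_contra hcon
  push_neg at hcon
  rw [max_lt_iff] at hcon
  obtain ⟨hA', hB'⟩ := hcon
  have hA : qF τ < qH ξ := by linarith
  have hB : qF (1 - τ) < qH (1 - ξ) := by linarith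
  have hξm : ξ ∈ Set.Ioo (0:ℝ) 1 := ⟨by linarith, hξ1⟩
  have hξm' : 1 - ξ ∈ Set.Ioo (0:ℝ) 1 := ⟨by linarith, by linarith⟩
  have hτm : τ ∈ Set.Ioo (0:ℝ) 1 := ⟨by linarith, hτ1⟩
  -- for each μ ∈ (1/2,1), the two hypotheses give dichotomies
  have claim1 : ∀ μ, 1/2 < μ → μ < 1 → qG μ < qH ξ →
      qG μ ≤ qF τ ∧ qH (1 - ξ) ≤ qG (1 - μ) := by
    intro μ hμ hμ1 hlt
    have hd2 := h2 μ ξ hμ hμ1 hξ hξ1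
    rcases le_max_iff.mp hd2 with h | h
    · exfalso; have : qH ξ ≤ qG μ := by linarith
      linarith
    · have hII : qH (1 - ξ) ≤ qG (1 - μ) := by linarith
      have hd1 := h1 τ μ hτ hτ1 hμ hμ1
      rcases le_max_iff.mp hd1 with h' | h'
      · exact ⟨by linarith, hII⟩
      · exfalso; have : qG (1 - μ) ≤ qF (1 - τ) := by linarith
        linarith
  have claim2 : ∀ μ, 1/2 < μ → μ < 1 → ¬ qG μ < qH ξ →
      qG (1 - μ) ≤ qF (1 - τ) := by
    intro μ hμ hμ1 hge
    push_neg at hge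
    have hd1 := h1 τ μ hτ hτ1 hμ hμ1
    rcases le_max_iff.mp hd1 with h' | h'
    · exfalso; have : qG μ ≤ qF τ := by linarith
      linarith
    · linarith
  -- qH (1-ξ) ≤ qH ξ
  have hHmono : qH (1 - ξ) ≤ qH ξ := hH hξm' hξm (by linarith)
  by_cases hall : ∀ μ, 1/2 < μ → μ < 1 → qG μ < qH ξ
  · -- all type I: qG is bounded above by qF τ on (0,1), contradicting common support
    have himg : qG '' Set.Ioo 0 1 ⊆ Set.Iic (qF τ) := by
      rintro _ ⟨μ, hμ, rfl⟩
      have h34 : (3/4 : ℝ) ∈ Set.Ioo (0:ℝ) 1 := by norm_num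
      rcases le_or_gt μ (3/4) with h | h
      · have h1' := (claim1 (3/4) (by norm_num) (by norm_num)
          (hall _ (by norm_num) (by norm_num))).1
        exact le_trans (hG hμ h34 h) h1'
      · exact (claim1 μ (by linarith [hμ.1, h]) hμ.2 (hall _ (by linarith) hμ.2)).1
    have hcl : closure (qG '' Set.Ioo 0 1) ⊆ Set.Iic (qF τ) :=
      closure_minimal himg isClosed_Iic
    have hmem : qH ξ ∈ closure (qG '' Set.Ioo 0 1) := by
      rw [hGH]; exact subset_closure ⟨ξ, hξm, rfl⟩
    have : qH ξ ≤ qF τ := hcl hmem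
    linarith
  · push_neg at hall
    obtain ⟨μ₁, hμ₁a, hμ₁b, hμ₁c⟩ := hall
    have hhalf : (1/2 : ℝ) ∈ Set.Ioo (0:ℝ) 1 := by norm_num
    by_cases hnone : ∀ μ, 1/2 < μ → μ < 1 → ¬ qG μ < qH ξ
    · -- all type II: continuity at 1/2 gives a contradiction
      have hle : qG (1/2) ≤ qF (1 - τ) := by
        apply cont_le_of_left qG hGc (by norm_num : (0:ℝ) < 1/2) hhalf
          (fun y hy => ⟨hy.1, by linarith [hy.2]⟩)
        intro y hy
        have := claim2 (1 - y) (by linarith [hy.2]) (by linarith [hy.1])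
          (hnone _ (by linarith [hy.2]) (by linarith [hy.1]))
        simpa using this
      have hge : qH ξ ≤ qG (1/2) := by
        apply cont_ge_of_right qG hGc (by norm_num : (1/2:ℝ) < 1) hhalf
          (fun y hy => ⟨by linarith [hy.1], hy.2⟩)
        intro y hy
        have := hnone y hy.1 hy.2
        push_neg at this
        exact this
      linarith
    · -- mixed case: boundary point c = sSup S
      push_neg at hnone
      obtain ⟨μ₀, hμ₀a, hμ₀b, hμ₀c⟩ := hnone
      set S : Set ℝ := {μ | 1/2 < μ ∧ μ < 1 ∧ qG μ < qH ξ} with hS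
      have hμ₀S : μ₀ ∈ S := ⟨hμ₀a, hμ₀b, hμ₀c⟩
      have hbdd : ∀ μ ∈ S, μ ≤ μ₁ := by
        intro μ hμ
        by_contra hgt
        push_neg at hgt
        have : qG μ₁ ≤ qG μ :=
          hG ⟨by linarith, hμ₁b⟩ ⟨by linarith [hμ.1], hμ.2.1⟩ hgt.le
        exact absurd hμ.2.2 (not_lt.mpr (by linarith [hμ₁c]))
      have hSne : S.Nonempty := ⟨μ₀, hμ₀S⟩
      have hSbdd : BddAbove S := ⟨μ₁, hbdd⟩
      set c := sSup S with hc
      have hc0 : μ₀ ≤ c := le_csSup hSbdd hμ₀S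
      have hc1 : c ≤ μ₁ := csSup_le hSne hbdd
      have hc2 : 1/2 < c := lt_of_lt_of_le hμ₀a hc0
      have hc3 : c < 1 := lt_of_le_of_lt hc1 hμ₁b
      have hcm : 1 - c ∈ Set.Ioo (0:ℝ) 1 := ⟨by linarith, by linarith⟩
      -- left of c: type I
      have htypeI : ∀ μ, 1/2 < μ → μ < c → qH (1 - ξ) ≤ qG (1 - μ) := by
        intro μ hμ hμc
        obtain ⟨s, hsS, hμs⟩ := exists_lt_of_lt_csSup hSne hμc
        have hμ1' : μ < 1 := lt_trans hμc hc3
        have : qG μ ≤ qG s :=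
          hG ⟨by linarith, hμ1'⟩ ⟨by linarith [hsS.1], hsS.2.1⟩ hμs.le
        exact (claim1 μ hμ hμ1' (lt_of_le_of_lt this hsS.2.2)).2
      -- right of c: type II
      have htypeII : ∀ μ, c < μ → μ < 1 → qG (1 - μ) ≤ qF (1 - τ) := by
        intro μ hμc hμ1'
        have hnS : μ ∉ S := fun h => absurd (le_csSup hSbdd h) (not_le.mpr hμc)
        have hnget : ¬ qG μ < qH ξ := fun h => hnS ⟨by linarith, hμ1', h⟩
        exact claim2 μ (by linarith) hμ1' hnget
      -- continuity of qG at 1 - c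
      have hge : qH (1 - ξ) ≤ qG (1 - c) := by
        apply cont_ge_of_right qG hGc (show (1:ℝ) - c < 1/2 by linarith) hcm
          (fun y hy => ⟨by linarith [hy.1], by linarith [hy.2]⟩)
        intro y hy
        have := htypeI (1 - y) (by linarith [hy.2]) (by linarith [hy.1])
        simpa using this
      have hle : qG (1 - c) ≤ qF (1 - τ) := by
        apply cont_le_of_left qG hGc (show (0:ℝ) < 1 - c by linarith) hcm
          (fun y hy => ⟨hy.1, by linarith [hy.2]⟩)
        intro y hy
        have := htypeII (1 - y) (by linarith [hy.2]) (by linarith [hy.1])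
        simpa using this
      linarith
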